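/- Summability of the second-moment series of the invariant law (Lemma A.4): for every ν > 0, the integral ∫_0^∞ (∑_{n=1}^∞ n² J_n(2r)² e^{−2νr} / r²) dr is finite, where J_n is the Bessel function of the first kind of order n. -/

import Mathlib

/-!
Expanding each `J_n(2x)²` as a double power series and grouping by the total degree `N`, the
coefficient of `x^{2N}` becomes a sum over `a, b ≤ N` of `(-1)^N c_N(a) c_N(b)` with
`c_N(a) = (-1)^a / (a! (N - a)!)`; since `∑_a c_N(a) = (1 - 1)^N / N!`, this gives
`∑_{n ∈ ℤ} J_{|n|}(2x)² = 1`. The recurrence `(n + 1) J_{n+1}(2r) = r (J_n(2r) + J_{n+2}(2r))`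
then removes both the weight `(n + 1)²` and the singular factor `r⁻²`, so the series is bounded by
`4 e^{-2νr}`, which is integrable on `(0, ∞)`.
-/

open MeasureTheory

noncomputable section

def besselJ (n : ℕ) (s : ℝ) : ℝ :=
  ∑' k : ℕ, ((-1 : ℝ) ^ k / ((Nat.factorial k : ℝ) * (Nat.factorial (k + n) : ℝ))) *
    (s / 2) ^ (2 * k + n)

open Nat

def besselTerm (m k : ℕ) (x : ℝ) : ℝ :=
  (-1) ^ k / (k ! * (k + m)! : ℝ) * x ^ (2 * k + m)

lemma abs_besselTerm_le (m k : ℕ) (x : ℝ) :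
    |besselTerm m k x| ≤ |x| ^ m * ((x ^ 2) ^ k / k !) := by
  have hk : (0 : ℝ) < k ! := mod_cast k.factorial_pos
  have hkm : (1 : ℝ) ≤ (k + m)! := mod_cast (k + m).factorial_pos
  rw [besselTerm, abs_mul, abs_div, abs_pow, abs_neg, abs_one, one_pow, abs_pow, pow_add,
    pow_mul, sq_abs, abs_of_pos (by positivity)]
  calc 1 / (k ! * (k + m)! : ℝ) * ((x ^ 2) ^ k * |x| ^ m)
      ≤ 1 / k ! * ((x ^ 2) ^ k * |x| ^ m) := by gcongr; exact le_mul_of_one_le_right hk.le hkm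
    _ = |x| ^ m * ((x ^ 2) ^ k / k !) := by ring

lemma summable_abs_besselTerm (m : ℕ) (x : ℝ) : Summable fun k ↦ |besselTerm m k x| :=
  .of_nonneg_of_le (fun _ ↦ abs_nonneg _) (abs_besselTerm_le m · x)
    ((Real.summable_pow_div_factorial _).mul_left _)

lemma hasSum_besselTerm (m : ℕ) (x : ℝ) :
    HasSum (fun k ↦ besselTerm m k x) (besselJ m (2 * x)) := by
  rw [besselJ, mul_div_cancel_left₀ x two_ne_zero]
  exact (summable_abs_besselTerm m x).of_abs.hasSum

lemma besselTerm_zero_recurrence (m : ℕ) (x : ℝ) :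
    (m + 1) * besselTerm (m + 1) 0 x = x * besselTerm m 0 x := by
  simp only [besselTerm, zero_add, pow_zero, factorial_zero, cast_one, one_mul, mul_zero,
    factorial_succ, cast_mul]
  have := factorial_pos m
  field_simp
  push_cast
  ring

lemma besselTerm_succ_recurrence (m k : ℕ) (x : ℝ) :
    (m + 1) * besselTerm (m + 1) (k + 1) x =
      x * besselTerm m (k + 1) x + x * besselTerm (m + 2) k x := by
  simp only [besselTerm, show k + 1 + (m + 1) = k + m + 1 + 1 by omega,
    show k + 1 + m = k + m + 1 by omega, show k + (m + 2) = k + m + 1 + 1 by omega,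
    factorial_succ, cast_mul, cast_add, cast_one, pow_succ, mul_add, add_mul]
  have := factorial_pos k
  have := factorial_pos (k + m)
  field_simp
  ring

theorem besselJ_recurrence (m : ℕ) (x : ℝ) :
    (m + 1) * besselJ (m + 1) (2 * x) = x * (besselJ m (2 * x) + besselJ (m + 2) (2 * x)) := by
  have tail := fun j ↦ (hasSum_nat_add_iff' 1).2 (hasSum_besselTerm j x)
  have hl := (tail (m + 1)).mul_left ((m : ℝ) + 1)
  have hr := ((tail m).mul_left x).add ((hasSum_besselTerm (m + 2) x).mul_left x)
  simp only [← besselTerm_succ_recurrence] at hr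
  simp only [Finset.sum_range_one] at hl hr
  linarith [hl.unique hr, besselTerm_zero_recurrence m x]

def binomialTerm (y : ℝ) (N a : ℕ) : ℝ := if a ≤ N then y ^ a / (a ! * (N - a)! : ℝ) else 0

lemma hasSum_binomialTerm (y : ℝ) (N : ℕ) : HasSum (binomialTerm y N) ((y + 1) ^ N / N !) := by
  have hsupp : ∀ a ∉ Finset.range (N + 1), binomialTerm y N a = 0 := fun a ha ↦
    if_neg (by simpa [Nat.lt_succ_iff] using ha)
  suffices ∑ a ∈ Finset.range (N + 1), binomialTerm y N a = (y + 1) ^ N / N ! from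
    this ▸ hasSum_sum_of_ne_finset_zero hsupp
  rw [add_pow, Finset.sum_div]
  refine Finset.sum_congr rfl fun a ha ↦ ?_
  have ha : a ≤ N := Nat.lt_succ_iff.1 (Finset.mem_range.1 ha)
  rw [binomialTerm, if_pos ha, one_pow, mul_one, Nat.cast_choose ℝ ha]
  have := factorial_pos N
  field_simp

lemma abs_binomialTerm_neg_one (N a : ℕ) : |binomialTerm (-1) N a| = binomialTerm 1 N a := by
  unfold binomialTerm
  split_ifs <;> simp [abs_div, abs_of_pos (by positivity : (0 : ℝ) < a ! * (N - a)!)]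

lemma hasSum_binomialTerm_mul (y : ℝ) (N : ℕ) :
    HasSum (fun p : ℕ × ℕ ↦ binomialTerm y N p.1 * binomialTerm y N p.2)
      (((y + 1) ^ N / N !) ^ 2) := by
  have h := hasSum_binomialTerm y N
  rw [sq]
  exact h.mul h (summable_mul_of_summable_norm (summable_norm_iff.2 h.summable)
    (summable_norm_iff.2 h.summable))

-- `(-1)^N c_N(a) c_N(b) x^{2N}` in the notation of the header, at `t = (N, a, b)`.
def besselSqKernel (x : ℝ) (t : ℕ × ℕ × ℕ) : ℝ :=
  (-x ^ 2) ^ t.1 * (binomialTerm (-1) t.1 t.2.1 * binomialTerm (-1) t.1 t.2.2)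

lemma hasSum_besselSqKernel_fiber (x : ℝ) (N : ℕ) :
    HasSum (fun p ↦ besselSqKernel x (N, p)) (if N = 0 then 1 else 0) := by
  have h := (hasSum_binomialTerm_mul (-1) N).mul_left ((-x ^ 2) ^ N)
  rcases N with _ | N <;> simpa [besselSqKernel] using h

lemma summable_besselSqKernel (x : ℝ) : Summable (besselSqKernel x) := by
  have hnorm (t : ℕ × ℕ × ℕ) : ‖besselSqKernel x t‖ =
      (x ^ 2) ^ t.1 * (binomialTerm 1 t.1 t.2.1 * binomialTerm 1 t.1 t.2.2) := by
    simp only [besselSqKernel, norm_mul, norm_pow, norm_neg, Real.norm_eq_abs,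
      abs_binomialTerm_neg_one, sq_abs]
  have hfiber (N : ℕ) : HasSum (fun p ↦ ‖besselSqKernel x (N, p)‖)
      ((x ^ 2) ^ N * ((1 + 1) ^ N / N !) ^ 2) := by
    simpa only [hnorm] using (hasSum_binomialTerm_mul 1 N).mul_left ((x ^ 2) ^ N)
  refine Summable.of_norm <| (summable_prod_of_nonneg fun _ ↦ norm_nonneg _).2
    ⟨fun N ↦ (hfiber N).summable, ?_⟩
  simp only [(hfiber _).tsum_eq]
  refine .of_nonneg_of_le (fun _ ↦ by positivity) (fun N ↦ ?_)
    (Real.summable_pow_div_factorial ((2 * x) ^ 2))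
  have h1 : (1 : ℝ) ≤ N ! := mod_cast N.factorial_pos
  calc (x ^ 2) ^ N * ((1 + 1) ^ N / N !) ^ 2 = ((2 * x) ^ 2) ^ N / N ! / N ! := by
        rw [mul_pow, mul_pow, one_add_one_eq_two, ← pow_mul, ← pow_mul]; ring
    _ ≤ ((2 * x) ^ 2) ^ N / N ! := div_le_self (by positivity) h1

lemma hasSum_besselSqKernel (x : ℝ) : HasSum (besselSqKernel x) 1 := by
  have h := (summable_besselSqKernel x).hasSum
  exact (h.prod_fiberwise (hasSum_besselSqKernel_fiber x)).unique (hasSum_ite_eq 0 1) ▸ h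

lemma besselSqKernel_swap (x : ℝ) (N a b : ℕ) :
    besselSqKernel x (N, b, a) = besselSqKernel x (N, a, b) := by
  simp only [besselSqKernel, mul_comm (binomialTerm (-1) N b)]

lemma besselSqKernel_eq_besselTerm_mul (x : ℝ) (m k l : ℕ) :
    besselSqKernel x (k + l + m, k, k + m) = besselTerm m k x * besselTerm m l x := by
  simp only [besselSqKernel, binomialTerm, if_pos (show k ≤ k + l + m by omega),
    if_pos (show k + m ≤ k + l + m by omega), show k + l + m - k = l + m by omega,
    show k + l + m - (k + m) = l by omega, besselTerm]
  have := factorial_pos k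
  have := factorial_pos l
  have := factorial_pos (k + m)
  have := factorial_pos (l + m)
  rw [neg_pow, ← pow_mul]
  field_simp
  -- what is left is the cancellation of the even powers `(-1)^(2j)`
  ring_nf
  simp only [pow_mul', neg_one_sq, one_pow, mul_one]

def besselSqIndex (t : ℤ × ℕ × ℕ) : ℕ × ℕ × ℕ :=
  (t.2.1 + t.2.2 + t.1.natAbs, t.2.1 + (-t.1).toNat, t.2.1 + t.1.toNat)

lemma besselSqIndex_injective : Function.Injective besselSqIndex := by
  rintro ⟨n, k, l⟩ ⟨n', k', l'⟩ h
  simp only [besselSqIndex, Prod.mk.injEq] at h ⊢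
  omega

lemma besselSqKernel_eq_zero_of_notMem_range (x : ℝ) (t : ℕ × ℕ × ℕ)
    (ht : t ∉ Set.range besselSqIndex) : besselSqKernel x t = 0 := by
  obtain ⟨N, a, b⟩ := t
  by_contra h
  have ha : a ≤ N := by_contra fun ha ↦ h (by simp [besselSqKernel, binomialTerm, ha])
  have hb : b ≤ N := by_contra fun hb ↦ h (by simp [besselSqKernel, binomialTerm, hb])
  refine ht ⟨((b : ℤ) - a, min a b, N - max a b), ?_⟩
  simp only [besselSqIndex, Prod.mk.injEq]
  omega

lemma besselSqKernel_besselSqIndex (x : ℝ) (t : ℤ × ℕ × ℕ) :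
    besselSqKernel x (besselSqIndex t) =
      besselTerm t.1.natAbs t.2.1 x * besselTerm t.1.natAbs t.2.2 x := by
  obtain ⟨n, k, l⟩ := t
  obtain ⟨m, rfl | rfl⟩ := Int.eq_nat_or_neg n
  · simpa [besselSqIndex] using besselSqKernel_eq_besselTerm_mul x m k l
  · simpa [besselSqIndex, besselSqKernel_swap] using besselSqKernel_eq_besselTerm_mul x m k l

theorem hasSum_besselJ_sq (x : ℝ) : HasSum (fun n : ℤ ↦ besselJ n.natAbs (2 * x) ^ 2) 1 := by
  have h : HasSum (fun t : ℤ × ℕ × ℕ ↦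
      besselTerm t.1.natAbs t.2.1 x * besselTerm t.1.natAbs t.2.2 x) 1 := by
    simpa only [Function.comp_def, besselSqKernel_besselSqIndex] using
      (besselSqIndex_injective.hasSum_iff (besselSqKernel_eq_zero_of_notMem_range x)).2
        (hasSum_besselSqKernel x)
  refine h.prod_fiberwise fun n ↦ ?_
  set f := fun k ↦ besselTerm n.natAbs k x
  have hf : Summable fun k ↦ ‖f k‖ := summable_abs_besselTerm _ x
  rw [sq]
  exact HasSum.mul (f := f) (g := f) (hasSum_besselTerm _ x) (hasSum_besselTerm _ x)
    (summable_mul_of_summable_norm hf hf)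

lemma summable_besselJ_sq_comp {i : ℕ → ℕ} (hi : Function.Injective i) (x : ℝ) :
    Summable fun n ↦ besselJ (i n) (2 * x) ^ 2 := by
  have h := (hasSum_besselJ_sq x).summable.comp_injective (Nat.cast_injective.comp hi)
  simpa only [Function.comp_def, Int.natAbs_natCast] using h

lemma tsum_besselJ_sq_comp_le_one {i : ℕ → ℕ} (hi : Function.Injective i) (x : ℝ) :
    ∑' n, besselJ (i n) (2 * x) ^ 2 ≤ 1 := by
  have h := tsum_comp_le_tsum_of_inj (hasSum_besselJ_sq x).summable (fun _ ↦ sq_nonneg _)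
    (Nat.cast_injective.comp hi)
  simpa only [Function.comp_def, Int.natAbs_natCast, (hasSum_besselJ_sq x).tsum_eq] using h

lemma sq_mul_besselJ_succ_div_sq_le (n : ℕ) {x : ℝ} (hx : x ≠ 0) :
    ((n : ℝ) + 1) ^ 2 * besselJ (n + 1) (2 * x) ^ 2 / x ^ 2 ≤
      2 * (besselJ n (2 * x) ^ 2 + besselJ (n + 2) (2 * x) ^ 2) := by
  rw [← mul_pow, besselJ_recurrence, mul_pow, mul_div_cancel_left₀ _ (pow_ne_zero 2 hx)]
  exact add_sq_le

lemma tsum_ofReal_sq_mul_besselJ_succ_le {x : ℝ} (hx : x ≠ 0) {e : ℝ} (he : 0 ≤ e) :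
    ∑' n : ℕ, ENNReal.ofReal (((n : ℝ) + 1) ^ 2 * besselJ (n + 1) (2 * x) ^ 2 * e / x ^ 2) ≤
      ENNReal.ofReal (4 * e) := by
  have h₀ := summable_besselJ_sq_comp (i := fun n ↦ n) Function.injective_id x
  have h₂ := summable_besselJ_sq_comp (add_left_injective 2) x
  have hle : ∑' n, (besselJ n (2 * x) ^ 2 + besselJ (n + 2) (2 * x) ^ 2) ≤ 2 := by
    rw [h₀.tsum_add h₂]
    linarith [tsum_besselJ_sq_comp_le_one (i := fun n ↦ n) Function.injective_id x,
      tsum_besselJ_sq_comp_le_one (add_left_injective 2) x]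
  calc ∑' n : ℕ, ENNReal.ofReal (((n : ℝ) + 1) ^ 2 * besselJ (n + 1) (2 * x) ^ 2 * e / x ^ 2)
      ≤ ∑' n : ℕ, ENNReal.ofReal (2 * (besselJ n (2 * x) ^ 2 + besselJ (n + 2) (2 * x) ^ 2) * e) :=
        ENNReal.tsum_le_tsum fun n ↦ ENNReal.ofReal_le_ofReal <| by
          rw [mul_div_right_comm]
          exact mul_le_mul_of_nonneg_right (sq_mul_besselJ_succ_div_sq_le n hx) he
    _ = ENNReal.ofReal (∑' n, 2 * (besselJ n (2 * x) ^ 2 + besselJ (n + 2) (2 * x) ^ 2) * e) :=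
        (ENNReal.ofReal_tsum_of_nonneg (fun _ ↦ by positivity)
          (((h₀.add h₂).mul_left 2).mul_right e)).symm
    _ ≤ ENNReal.ofReal (4 * e) := ENNReal.ofReal_le_ofReal <| by
        rw [tsum_mul_right, tsum_mul_left]
        exact mul_le_mul_of_nonneg_right (by linarith) he

/-- **Summability of the second-moment series of the invariant law** (Lemma A.4): for every
`ν > 0`, the integral `∫_0^∞ ∑_{n=1}^∞ n² J_n(2r)² e^{-2νr} / r² dr` is finite (the sum
over `n ≥ 1` is written as a sum over `n : ℕ` of the terms of index `n + 1`). -/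
theorem summability_second_moment_series (ν : ℝ) (hν : 0 < ν) :
    ∫⁻ r in Set.Ioi (0 : ℝ),
      ∑' n : ℕ, ENNReal.ofReal
        (((n : ℝ) + 1) ^ 2 * besselJ (n + 1) (2 * r) ^ 2 * Real.exp (-2 * ν * r) / r ^ 2)
      < ⊤ := by
  have hbound := setLIntegral_mono' (μ := volume) measurableSet_Ioi
    (g := fun r ↦ ENNReal.ofReal (4 * Real.exp (-2 * ν * r)))
    fun r hr ↦ tsum_ofReal_sq_mul_besselJ_succ_le (ne_of_gt hr) (Real.exp_pos _).le
  refine hbound.trans_lt (Integrable.lintegral_lt_top ?_)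
  simpa [neg_mul] using (exp_neg_integrableOn_Ioi 0 (by positivity : 0 < 2 * ν)).const_mul 4

end
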